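/- arXiv:1106.4649 — 2 statements merged into one kernel-verified Lean document; each statement's English description precedes it below -/
import Mathlib

section
/- Let Q be a finite multiset of values with |Q| = N > 0 and let 0 < α < 1. Any value that is an α-majority of Q (occurs more than α·N times) must equal the k-th smallest element of Q for some k of the form k = ⌈i·α·N⌉ with 1 ≤ i ≤ ⌊1/α⌋. -/
/-! In the sorted list of `Q`, the copies of `w` occupy the positions `c, …, c + m - 1`, where `c`
is the number of elements below `w` and `m > aN` is the multiplicity of `w`. A block of more than
`aN` consecutive positions contains a multiple `iaN` of the step `aN` (taking
`i = ⌊c / aN⌋ + 1`), and then the `⌈iaN⌉`-th smallest element is `w`; as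
that position is at most `N`, also `i ≤ 1 / a`. -/

namespace List.Pairwise

theorem getElem?_eq_of_countP_le_of_lt {α : Type*} [LinearOrder α] {l : List α}
    (hl : l.Pairwise (· ≤ ·)) {w : α} {j : ℕ} (hj₁ : l.countP (· < w) ≤ j)
    (hj₂ : j < l.countP (· < w) + l.count w) : l[j]? = some w := by
  induction l generalizing j with
  | nil => simp at hj₂
  | cons x t ih =>
    obtain ⟨hx, ht⟩ := pairwise_cons.1 hl
    rcases lt_trichotomy x w with hxw | rfl | hwx
    · rcases j with _ | j
      · simp [hxw] at hj₁
      · simp only [hxw, hxw.ne, decide_true, countP_cons_of_pos, add_le_add_iff_right, ne_eq,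
          not_false_eq_true, count_cons_of_ne, getElem?_cons_succ] at hj₁ hj₂ ⊢
        exact ih ht (by omega) (by omega)
    · have hc : t.countP (· < x) = 0 := countP_eq_zero.2 fun y hy => by simpa using hx y hy
      rcases j with _ | j
      · simp
      · simp only [lt_self_iff_false, decide_false, Bool.false_eq_true, not_false_eq_true,
          countP_cons_of_neg, hc, count_cons_self, zero_add, Order.lt_add_one_iff,
          getElem?_cons_succ] at hj₂ ⊢
        exact ih ht (by omega) (by omega)
    · have hc : (x :: t).countP (· < w) = 0 := countP_eq_zero.2 fun y hy => by
        rcases mem_cons.1 hy with rfl | hy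
        · simpa using hwx.le
        · simpa using (hwx.trans_le (hx y hy)).le
      have hm : (x :: t).count w = 0 := count_eq_zero.2 fun hy => by
        rcases mem_cons.1 hy with rfl | hy
        · exact hwx.false
        · exact (hwx.trans_le (hx w hy)).false
      omega

end List.Pairwise

theorem exists_nat_mul_mem_Ioc {K : Type*} [Field K] [LinearOrder K] [IsStrictOrderedRing K]
    [FloorSemiring K] {s x : K} (hs : 0 < s) (hx : 0 ≤ x) :
    ∃ i : ℕ, 0 < i ∧ (i : K) * s ∈ Set.Ioc x (x + s) := by
  refine ⟨⌊x / s⌋₊ + 1, Nat.succ_pos _, ?_, ?_⟩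
  · rw [← div_lt_iff₀ hs]
    push_cast
    exact Nat.lt_floor_add_one _
  · push_cast
    rw [add_mul, one_mul, add_le_add_iff_right, ← le_div_iff₀ hs]
    exact Nat.floor_le (div_nonneg hx hs.le)

theorem majority_is_some_quantile_general {α : Type*} [LinearOrder α]
    (Q : Multiset α) (N : ℕ) (hN : Multiset.card Q = N) (hN0 : 0 < N)
    (a : ℝ) (ha0 : 0 < a) (w : α)
    (hmaj : a * (N : ℝ) < (Q.count w : ℝ)) :
    ∃ i : ℕ, 1 ≤ i ∧ i ≤ ⌊1 / a⌋₊ ∧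
      (Q.sort (· ≤ ·))[⌈(i : ℝ) * a * N⌉₊ - 1]? = some w := by
  set l := Q.sort (· ≤ ·)
  set c := l.countP (· < w)
  have hcount : l.count w = Q.count w := by rw [← Multiset.coe_count, Multiset.sort_eq]
  obtain ⟨i, hi, hci, hic⟩ := exists_nat_mul_mem_Ioc (by positivity : 0 < a * N) c.cast_nonneg
  rw [← mul_assoc] at hci hic
  set k := ⌈(i : ℝ) * a * N⌉₊
  have hck : c < k := Nat.lt_ceil.2 hci
  have hkc : k ≤ c + l.count w := Nat.ceil_le.2 (by push_cast; rw [hcount]; linarith)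
  have hl : l.Pairwise (· ≤ ·) := Q.pairwise_sort _
  have hk : l[k - 1]? = some w := hl.getElem?_eq_of_countP_le_of_lt (by omega) (by omega)
  have hkN : k ≤ N := by
    have := (List.getElem?_eq_some_iff.1 hk).1
    rw [Multiset.length_sort, hN] at this
    omega
  refine ⟨i, hi, Nat.le_floor ?_, hk⟩
  rw [le_div_iff₀ ha0]
  refine le_of_mul_le_mul_right ?_ (Nat.cast_pos.2 hN0 : (0 : ℝ) < N)
  calc (i : ℝ) * a * N ≤ k := Nat.le_ceil _
    _ ≤ 1 * N := by rw [one_mul]; exact_mod_cast hkN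

theorem majority_is_some_quantile {α : Type*} [LinearOrder α]
    (Q : Multiset α) (N : ℕ) (hN : Multiset.card Q = N) (hN0 : 0 < N)
    (a : ℝ) (ha0 : 0 < a) (ha1 : a < 1) (w : α)
    (hmaj : a * (N : ℝ) < (Q.count w : ℝ)) :
    ∃ i : ℕ, 1 ≤ i ∧ i ≤ ⌊1 / a⌋₊ ∧
      (Q.sort (· ≤ ·))[⌈(i : ℝ) * a * N⌉₊ - 1]? = some w :=
  majority_is_some_quantile_general Q N hN hN0 a ha0 w hmaj
end

section
/- Let S be a finite sequence over alphabet {0,1}^h (bit strings of length h), viewed via a wavelet tree: for a prefix L ∈ {0,1}^d, let S(L) be the subsequence of S of symbols whose binary code starts with L, and let B(L) be the bit sequence whose i-th bit is the (d+1)-st bit of S(L)[i]. Then for any symbol c ∈ {0,1}^h and position i, the number of occurrences of c in S[0..i] equals the result of iteratively reducing i through the tree: starting with i₀ = i and setting i_{d+1} = rank_{c[d]}(B(c{..d}), i_d) − 1 for d = 0,…,h−1, we have rank_c(S, i) = i_h + 1. -/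
/-- The subsequence of `S` consisting of the symbols whose code starts with prefix `L`. -/
def wtSubseq (S : List (List Bool)) (L : List Bool) : List (List Bool) :=
  S.filter (fun s => s.take L.length == L)

/-- The bitmap stored at the node with label `L`: the `(|L|+1)`-st bit of each
symbol of the subsequence associated with `L`. -/
def wtBits (S : List (List Bool)) (L : List Bool) : List Bool :=
  (wtSubseq S L).map (fun s => s.getD L.length false)

/-- `rankZ b B j` = number of occurrences of bit `b` among positions `0..j` of `B`,
with the convention `rankZ b B (-1) = 0`. -/
def rankZ (b : Bool) (B : List Bool) (j : ℤ) : ℤ :=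
  ((B.take (j + 1).toNat).count b : ℤ)

/-- The iterative reduction of position `i` through the wavelet tree along the
path given by the code `c`: `red S c i 0 = i` and
`red S c i (d+1) = rank_{c[d]}(B(c{..d}), red S c i d) - 1`. -/
def wtRed (S : List (List Bool)) (c : List Bool) (i : ℕ) : ℕ → ℤ
  | 0 => (i : ℤ)
  | d + 1 => rankZ (c.getD d false) (wtBits S (c.take d)) (wtRed S c i d) - 1

namespace List

variable {α β : Type*}

theorem take_countP_take_filter (p : α → Bool) (l : List α) (n : ℕ) :
    (l.filter p).take ((l.take n).countP p) = (l.take n).filter p := by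
  induction l generalizing n with
  | nil => simp
  | cons a l ih =>
    cases n with
    | zero => simp
    | succ n => cases hpa : p a <;> simp [hpa, ih]

theorem count_take_countP_map_filter [BEq β] (p : α → Bool) (f : α → β) (b : β)
    (l : List α) (n : ℕ) :
    (((l.filter p).map f).take ((l.take n).countP p)).count b =
      (l.take n).countP (fun a => p a && f a == b) := by
  rw [← map_take, take_countP_take_filter, count_eq_countP, countP_map, countP_filter]
  simp only [Function.comp_def, Bool.and_comm]

theorem take_add_one_eq_take_add_one_iff {l l' : List α} {d : ℕ} :
    l.take (d + 1) = l'.take (d + 1) ↔ l.take d = l'.take d ∧ l[d]? = l'[d]? := by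
  constructor
  · intro h
    have htake : l.take d = l'.take d := by
      simpa [take_take] using congrArg (take d) h
    rw [take_add_one, take_add_one, htake, append_cancel_left_eq] at h
    exact ⟨htake, by cases hl : l[d]? <;> cases hl' : l'[d]? <;> simp_all⟩
  · rintro ⟨htake, hget⟩
    rw [take_add_one, take_add_one, htake, hget]

end List

theorem rankZ_wtBits (b : Bool) (S : List (List Bool)) (L : List Bool) (n : ℕ) :
    rankZ b (wtBits S L) ((wtSubseq (S.take n) L).length - 1) =
      (S.take n).countP (fun s => s.take L.length == L && s.getD L.length false == b) := by
  rw [rankZ, sub_add_cancel, Int.toNat_natCast, wtBits, wtSubseq, wtSubseq,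
    ← List.countP_eq_length_filter, List.count_take_countP_map_filter]

/- After `d` steps the reduced position, plus one, is the number of symbols of `S[0..i]` with
prefix `c{..d}`: these are the first entries of `S(c{..d})`, so ranking the bit `c[d]` among their
next bits counts exactly the symbols with prefix `c{..d+1}`. -/
theorem wtRed_add_one_eq_length_wtSubseq (S : List (List Bool)) (c : List Bool) (i : ℕ)
    (hi : i < S.length) (d : ℕ) (hS : ∀ s ∈ S, d ≤ s.length) (hc : d ≤ c.length) :
    wtRed S c i d + 1 = (wtSubseq (S.take (i + 1)) (c.take d)).length := by
  induction d with
  | zero => simpa [wtRed, wtSubseq] using hi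
  | succ d ih =>
    have hcd : (c.take d).length = d := by rw [List.length_take]; omega
    have hcd1 : (c.take (d + 1)).length = d + 1 := by rw [List.length_take]; omega
    have hred := eq_sub_of_add_eq (ih (fun s hs => (hS s hs).trans' d.le_succ) (by omega))
    rw [wtRed, sub_add_cancel, hred, rankZ_wtBits, hcd, wtSubseq, hcd1,
      ← List.countP_eq_length_filter]
    congr 1
    refine List.countP_congr fun s hs => ?_
    have hds : d < s.length := hS s (List.mem_of_mem_take hs)
    have hdc : d < c.length := hc
    simp only [Bool.and_eq_true, beq_iff_eq, List.take_add_one_eq_take_add_one_iff,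
      List.getD_eq_getElem?_getD, List.getElem?_eq_getElem hds, List.getElem?_eq_getElem hdc,
      Option.getD_some, Option.some_inj]

theorem length_wtSubseq_of_length_eq (T : List (List Bool)) (c : List Bool)
    (hT : ∀ s ∈ T, s.length = c.length) :
    (wtSubseq T c).length = T.count c := by
  rw [wtSubseq, ← List.countP_eq_length_filter, List.count_eq_countP]
  refine List.countP_congr fun s hs => ?_
  rw [← hT s hs, List.take_length]

theorem wavelet_tree_rank (h : ℕ) (S : List (List Bool))
    (hS : ∀ s ∈ S, s.length = h) (c : List Bool) (hc : c.length = h)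
    (i : ℕ) (hi : i < S.length) :
    ((S.take (i + 1)).count c : ℤ) = wtRed S c i h + 1 := by
  rw [wtRed_add_one_eq_length_wtSubseq S c i hi h (fun s hs => (hS s hs).ge) hc.ge, ← hc,
    List.take_length, length_wtSubseq_of_length_eq]
  intro s hs
  rw [hS s (List.mem_of_mem_take hs), hc]
end
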